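/- Let N ≥ 1, let λ_1,…,λ_N > 0, let β > 1 and let B be a positive integer. Let Z_1,…,Z_N be independent random variables, Z_i exponentially distributed with rate λ_i, and define D = min_{i} max(B + ⌊log_β Z_i⌋, 0). Then E[D] ≤ 1 + Γ(0, λ β^{−B}) / ln β, where λ = ∑_{i=1}^N λ_i and Γ(0, x) = ∫_x^∞ t^{−1} e^{−t} dt is the upper incomplete gamma function. -/

import Mathlib

/-!
Since `D` is a nonnegative random variable, `E[D] = ∫_0^∞ P(D > t) dt`. For `t > 0`, `D > t`
forces `log_β Z_i > t - B`, i.e. `Z_i > β^{t-B}`, for every `i`; by independence this has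
probability `exp(-λ β^{t-B})`. The substitution `u = λ β^{t-B}` turns `∫_0^∞ exp(-λ β^{t-B}) dt`
into `Γ(0, λ β^{-B}) / ln β`, so in fact `E[D] ≤ Γ(0, λ β^{-B}) / ln β`.
-/

open MeasureTheory ProbabilityTheory

/-- The upper incomplete gamma function at `0`: `Γ(0, x) = ∫_x^∞ t⁻¹ e^{-t} dt`. -/
noncomputable def upperGamma0 (x : ℝ) : ℝ := ∫ t in Set.Ioi x, t⁻¹ * Real.exp (-t)

open Set Real

theorem Finset.aemeasurable_inf' {ι δ α : Type*} [MeasurableSpace δ] [MeasurableSpace α]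
    [SemilatticeInf α] [MeasurableInf₂ α] {μ : Measure δ} {s : Finset ι} (hs : s.Nonempty)
    {f : ι → δ → α} (hf : ∀ i ∈ s, AEMeasurable (f i) μ) :
    AEMeasurable (fun x => s.inf' hs fun i => f i x) μ := by
  convert Finset.inf'_induction hs f (p := (AEMeasurable · μ)) (fun _ hg _ hh => hg.inf hh) hf
    using 1
  ext x
  exact (Finset.inf'_apply hs f x).symm

lemma upperGamma0_nonneg {x : ℝ} (hx : 0 ≤ x) : 0 ≤ upperGamma0 x :=
  setIntegral_nonneg measurableSet_Ioi fun _ ht =>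
    mul_nonneg (inv_nonneg.2 (hx.trans (le_of_lt ht))) (exp_pos _).le

lemma integrableOn_inv_mul_exp_neg_Ioi {x : ℝ} (hx : 0 < x) :
    IntegrableOn (fun t => t⁻¹ * exp (-t)) (Ioi x) := by
  refine Integrable.mono' ((exp_neg_integrableOn_Ioi x one_pos).const_mul x⁻¹)
    (by fun_prop) ((ae_restrict_iff' measurableSet_Ioi).2 (ae_of_all _ fun t ht => ?_))
  have ht0 : 0 < t := hx.trans ht
  rw [norm_of_nonneg (by positivity), neg_one_mul]
  gcongr
  exact le_of_lt ht

/-- The substitution `u = a b^t`, `du = u log b dt`. -/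
lemma lintegral_exp_neg_mul_rpow {a b : ℝ} (ha : 0 < a) (hb : 1 < b) :
    ∫⁻ t in Ioi (0 : ℝ), ENNReal.ofReal (exp (-(a * b ^ t)))
      = ENNReal.ofReal (upperGamma0 a / log b) := by
  have hb0 : 0 < b := zero_lt_one.trans hb
  have hlog : 0 < log b := log_pos hb
  have hderiv (t : ℝ) : HasDerivAt (fun t => a * b ^ t) (a * b ^ t * log b) t :=
    (((hasDerivAt_id t).const_rpow hb0).const_mul a).congr_deriv (by simp only [id]; ring)
  have himage : (fun t : ℝ => a * b ^ t) '' Ioi 0 = Ioi a := by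
    ext u
    constructor
    · rintro ⟨t, ht, rfl⟩
      exact lt_mul_of_one_lt_right ha (one_lt_rpow hb ht)
    · intro hu
      have hu0 : 0 < u := ha.trans hu
      refine ⟨logb b (u / a), logb_pos hb ((one_lt_div ha).2 hu), ?_⟩
      dsimp only
      rw [rpow_logb hb0 hb.ne' (div_pos hu0 ha), mul_div_cancel₀ _ ha.ne']
  have hinj : InjOn (fun t : ℝ => a * b ^ t) (Ioi 0) :=
    ((strictMono_rpow_of_base_gt_one hb).const_mul ha).injective.injOn
  have hjacobian : ∀ t ∈ Ioi (0 : ℝ),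
      ENNReal.ofReal |a * b ^ t * log b| * ENNReal.ofReal ((a * b ^ t)⁻¹ * exp (-(a * b ^ t)))
        = ENNReal.ofReal (log b) * ENNReal.ofReal (exp (-(a * b ^ t))) := fun t _ => by
    have hpow : 0 < b ^ t := rpow_pos_of_pos hb0 t
    rw [← ENNReal.ofReal_mul (abs_nonneg _), ← ENNReal.ofReal_mul hlog.le,
      abs_of_pos (by positivity)]
    field_simp
  have hgamma : 0 ≤ᵐ[volume.restrict (Ioi a)] fun u => u⁻¹ * exp (-u) :=
    (ae_restrict_iff' measurableSet_Ioi).2 (ae_of_all _ fun u hu =>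
      mul_nonneg (inv_nonneg.2 (ha.trans hu).le) (exp_pos _).le)
  rw [ENNReal.ofReal_div_of_pos hlog, ENNReal.eq_div_iff (by simpa using hlog) ENNReal.ofReal_ne_top,
    upperGamma0, ofReal_integral_eq_lintegral_ofReal (integrableOn_inv_mul_exp_neg_Ioi ha) hgamma,
    ← himage, lintegral_image_eq_lintegral_abs_deriv_mul measurableSet_Ioi
      (fun t _ => (hderiv t).hasDerivWithinAt) hinj,
    setLIntegral_congr_fun measurableSet_Ioi hjacobian, lintegral_const_mul _ (by fun_prop)]

lemma expMeasure_Ioi {r x : ℝ} (hr : 0 < r) (hx : 0 ≤ x) :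
    expMeasure r (Ioi x) = ENNReal.ofReal (exp (-(r * x))) := by
  have := isProbabilityMeasure_expMeasure hr
  have hexp : exp (-(r * x)) ≤ 1 := exp_le_one_iff.2 (neg_nonpos.2 (mul_nonneg hr.le hx))
  rw [← compl_Iic, prob_compl_eq_one_sub measurableSet_Iic, ← ofReal_cdf, cdf_expMeasure_eq hr,
    if_pos hx, ← ENNReal.ofReal_one, ← ENNReal.ofReal_sub _ (sub_nonneg.2 hexp), sub_sub_cancel]

lemma ae_expMeasure_pos {r : ℝ} (hr : 0 < r) : ∀ᵐ x ∂expMeasure r, 0 < x := by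
  have := isProbabilityMeasure_expMeasure hr
  rw [ae_iff_measure_eq measurableSet_Ioi.nullMeasurableSet, measure_univ]
  exact (expMeasure_Ioi hr le_rfl).trans (by simp)

noncomputable def backoffTimer (β : ℝ) (B : ℤ) (z : ℝ) : ℤ := max (B + ⌊logb β z⌋) 0

lemma measurable_backoffTimer (β : ℝ) (B : ℤ) : Measurable (backoffTimer β B) :=
  (measurable_const.add (measurable_log.div_const _).floor).max measurable_const

lemma rpow_sub_lt_of_lt_backoffTimer {β z t : ℝ} {B : ℤ} (hβ : 1 < β) (hz : 0 < z) (ht : 0 < t)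
    (h : t < backoffTimer β B z) : β ^ (t - B) < z := by
  rcases max_choice (B + ⌊logb β z⌋) 0 with hmax | hmax
  · rw [backoffTimer, hmax, Int.cast_add] at h
    rw [← lt_logb_iff_rpow_lt hβ hz]
    linarith [Int.floor_le (logb β z)]
  · rw [backoffTimer, hmax, Int.cast_zero] at h
    exact absurd ht h.not_gt

section ExponentialLaw

variable {Ω : Type*} [MeasurableSpace Ω] {μ : Measure Ω}

lemma aemeasurable_of_map_eq_expMeasure {X : Ω → ℝ} {r : ℝ} (hr : 0 < r)
    (hX : μ.map X = expMeasure r) : AEMeasurable X μ := by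
  have := isProbabilityMeasure_expMeasure hr
  exact AEMeasurable.of_map_ne_zero (hX ▸ IsProbabilityMeasure.ne_zero _)

lemma ae_pos_of_map_eq_expMeasure {X : Ω → ℝ} {r : ℝ} (hr : 0 < r)
    (hX : μ.map X = expMeasure r) : ∀ᵐ ω ∂μ, 0 < X ω :=
  ae_of_ae_map (aemeasurable_of_map_eq_expMeasure hr hX) (hX ▸ ae_expMeasure_pos hr)

theorem ProbabilityTheory.iIndepFun.measure_forall_lt_of_expMeasure {ι : Type*} [Fintype ι]
    {Z : ι → Ω → ℝ} (hind : iIndepFun Z μ) {lam : ι → ℝ} (hlam : ∀ i, 0 < lam i)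
    (hlaw : ∀ i, μ.map (Z i) = expMeasure (lam i)) {v : ℝ} (hv : 0 ≤ v) :
    μ {ω | ∀ i, v < Z i ω} = ENNReal.ofReal (exp (-((∑ i, lam i) * v))) := by
  have hiInter : {ω | ∀ i, v < Z i ω} = ⋂ i, Z i ⁻¹' Ioi v := by ext; simp
  rw [hiInter, hind.meas_iInter fun i => ⟨Ioi v, measurableSet_Ioi, rfl⟩]
  calc ∏ i, μ (Z i ⁻¹' Ioi v) = ∏ i, ENNReal.ofReal (exp (-(lam i * v))) := by
        refine Finset.prod_congr rfl fun i _ => ?_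
        rw [← Measure.map_apply_of_aemeasurable
          (aemeasurable_of_map_eq_expMeasure (hlam i) (hlaw i)) measurableSet_Ioi, hlaw i,
          expMeasure_Ioi (hlam i) hv]
    _ = ENNReal.ofReal (exp (-((∑ i, lam i) * v))) := by
        rw [← ENNReal.ofReal_prod_of_nonneg fun i _ => (exp_pos _).le, ← exp_sum,
          Finset.sum_mul, ← Finset.sum_neg_distrib]

theorem measure_lt_inf'_backoffTimer_le {ι : Type*} [Fintype ι]
    (hι : (Finset.univ : Finset ι).Nonempty) {Z : ι → Ω → ℝ} (hind : iIndepFun Z μ)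
    {lam : ι → ℝ} (hlam : ∀ i, 0 < lam i) (hlaw : ∀ i, μ.map (Z i) = expMeasure (lam i))
    {β : ℝ} (hβ : 1 < β) (B : ℤ) {t : ℝ} (ht : 0 < t) :
    μ {ω | t < ((Finset.univ.inf' hι fun i => backoffTimer β B (Z i ω) : ℤ) : ℝ)}
      ≤ ENNReal.ofReal (exp (-((∑ i, lam i) * β ^ (t - B)))) := by
  have hpos : ∀ᵐ ω ∂μ, ∀ i, 0 < Z i ω :=
    ae_all_iff.2 fun i => ae_pos_of_map_eq_expMeasure (hlam i) (hlaw i)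
  calc _ ≤ μ {ω | ∀ i, β ^ (t - B) < Z i ω} := measure_mono_ae <| by
          filter_upwards [hpos] with ω hω hDω i
          exact rpow_sub_lt_of_lt_backoffTimer hβ (hω i) ht
            (hDω.trans_le (by exact_mod_cast Finset.inf'_le _ (Finset.mem_univ i)))
    _ = _ := hind.measure_forall_lt_of_expMeasure hlam hlaw
          (rpow_pos_of_pos (zero_lt_one.trans hβ) _).le

end ExponentialLaw

theorem expected_backoff_overhead_le_general
    {Ω : Type*} [MeasurableSpace Ω] (μ : Measure Ω)
    (N : ℕ) (hN : 1 ≤ N)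
    (lam : Fin N → ℝ) (hlam : ∀ i, 0 < lam i)
    (β : ℝ) (hβ : 1 < β) (B : ℕ)
    (Z : Fin N → Ω → ℝ)
    (hindep : iIndepFun Z μ)
    (hlaw : ∀ i, Measure.map (Z i) μ = expMeasure (lam i)) :
    ∫ ω, ((Finset.univ.inf' ⟨⟨0, hN⟩, Finset.mem_univ _⟩
          fun i => max ((B : ℤ) + ⌊Real.logb β (Z i ω)⌋) 0 : ℤ) : ℝ) ∂μ
      ≤ 1 + upperGamma0 ((∑ i, lam i) * β ^ (-(B : ℝ))) / Real.log β := by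
  have hne : (Finset.univ : Finset (Fin N)).Nonempty := ⟨⟨0, hN⟩, Finset.mem_univ _⟩
  set D : Ω → ℝ := fun ω => ((Finset.univ.inf' hne fun i => backoffTimer β B (Z i ω) : ℤ) : ℝ)
  have hβ0 : 0 < β := zero_lt_one.trans hβ
  have hlam_sum : 0 < (∑ i, lam i) * β ^ (-(B : ℝ)) :=
    mul_pos (Finset.sum_pos (fun i _ => hlam i) hne) (rpow_pos_of_pos hβ0 _)
  have hD_nonneg : 0 ≤ D := fun ω =>
    Int.cast_nonneg (Finset.le_inf' _ _ fun i _ => le_max_right _ _)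
  have hD_meas : AEMeasurable D μ :=
    (measurable_of_countable _).comp_aemeasurable <| Finset.aemeasurable_inf' _ fun i _ =>
      (measurable_backoffTimer β B).comp_aemeasurable
        (aemeasurable_of_map_eq_expMeasure (hlam i) (hlaw i))
  have hbound_nonneg : 0 ≤ upperGamma0 ((∑ i, lam i) * β ^ (-(B : ℝ))) / log β :=
    div_nonneg (upperGamma0_nonneg hlam_sum.le) (log_pos hβ).le
  have hlintegral : ∫⁻ ω, ENNReal.ofReal (D ω) ∂μ
      ≤ ENNReal.ofReal (upperGamma0 ((∑ i, lam i) * β ^ (-(B : ℝ))) / log β) := by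
    rw [lintegral_eq_lintegral_meas_lt μ (ae_of_all _ hD_nonneg) hD_meas,
      ← lintegral_exp_neg_mul_rpow hlam_sum hβ]
    refine setLIntegral_mono (by fun_prop) fun t ht => ?_
    refine (measure_lt_inf'_backoffTimer_le _ hindep hlam hlaw hβ B ht).trans_eq ?_
    rw [Int.cast_natCast, sub_eq_neg_add, rpow_add hβ0, mul_assoc]
  calc ∫ ω, D ω ∂μ ≤ upperGamma0 ((∑ i, lam i) * β ^ (-(B : ℝ))) / log β := by
        rw [integral_eq_lintegral_of_nonneg_ae (ae_of_all _ hD_nonneg)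
          hD_meas.aestronglyMeasurable]
        exact ENNReal.toReal_le_of_le_ofReal hbound_nonneg hlintegral
    _ ≤ _ := le_add_of_nonneg_left zero_le_one

/-- **Theorem 4 of the paper.** With independent exponential timers `Z i` of
rates `λ i`, the expected minimum discrete backoff timer
`D = min_i max (B + ⌊log_β (Z i)⌋) 0` satisfies
`E[D] ≤ 1 + Γ(0, λ β^{-B}) / ln β` where `λ = ∑ i, λ i`. -/
theorem expected_backoff_overhead_le
    {Ω : Type*} [MeasurableSpace Ω] (μ : Measure Ω) [IsProbabilityMeasure μ]
    (N : ℕ) (hN : 1 ≤ N)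
    (lam : Fin N → ℝ) (hlam : ∀ i, 0 < lam i)
    (β : ℝ) (hβ : 1 < β) (B : ℕ) (hB : 0 < B)
    (Z : Fin N → Ω → ℝ) (hZmeas : ∀ i, Measurable (Z i))
    (hindep : iIndepFun Z μ)
    (hlaw : ∀ i, Measure.map (Z i) μ = expMeasure (lam i)) :
    ∫ ω, ((Finset.univ.inf' ⟨⟨0, hN⟩, Finset.mem_univ _⟩
          fun i => max ((B : ℤ) + ⌊Real.logb β (Z i ω)⌋) 0 : ℤ) : ℝ) ∂μ
      ≤ 1 + upperGamma0 ((∑ i, lam i) * β ^ (-(B : ℝ))) / Real.log β :=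
  expected_backoff_overhead_le_general μ N hN lam hlam β hβ B Z hindep hlaw
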